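/- Let n, k be integers with n > 2k ≥ 2, and let a = a_{n,k} := (∏_{j=-k}^{k-1} (n+2j))^{-1/k}. Define U(x) = (1 + a|x|²)^{-(n-2k)/2} for x ∈ ℝⁿ. Then U satisfies Δ^k U = U^{(n+2k)/(n-2k)} on ℝⁿ, where Δ is the (geometer's, nonnegative) Euclidean Laplacian. -/

import Mathlib

noncomputable section

/-- The (geometer's, nonnegative) Euclidean Laplacian `Δ f = -∑ ∂²f/∂xᵢ²`. -/
def lap {n : ℕ} (f : EuclideanSpace ℝ (Fin n) → ℝ) : EuclideanSpace ℝ (Fin n) → ℝ :=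
  fun x => -∑ i : Fin n,
    fderiv ℝ (fun y => fderiv ℝ f y (EuclideanSpace.single i 1)) x (EuclideanSpace.single i 1)

/-- The constant `a_{n,k} = (∏_{j=-k}^{k-1} (n+2j))^{-1/k}`. -/
def ank (n k : ℕ) : ℝ :=
  (∏ j ∈ Finset.range (2 * k), ((n:ℝ) + 2 * (j:ℝ) - 2 * (k:ℝ))) ^ (-(1 / (k:ℝ)))

/-- The standard bubble `U(x) = (1 + a_{n,k}|x|²)^{-(n-2k)/2}`. -/
def Ufun (n k : ℕ) : EuclideanSpace ℝ (Fin n) → ℝ :=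
  fun x => (1 + ank n k * ‖x‖ ^ 2) ^ (-(((n:ℝ) - 2 * (k:ℝ)) / 2))

/-! Write `r = 1 + a|x|²`. A direct computation gives
`Δ r^p = μ(p) r^(p-1) + ν(p) r^(p-2)` with `μ(p) = -2ap(2p - 2 + n)` and `ν(p) = 4ap(p - 1)`,
so `Δ^m r^p₀` is a combination of `r^(p₀-m-i)`, `0 ≤ i ≤ m`, whose coefficients obey a Pascal-type
recursion with an explicit product solution. For `p₀ = -(n-2k)/2` and `m = k`, each coefficient with
`i < k` contains the factor `n + 2p₀ - 2k = 0`, and the top one is `a^k ∏_{j<2k} (n - 2k + 2j)`,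
which equals `1` by the choice of `a_{n,k}`. Finally `r^(p₀-2k) = U^((n+2k)/(n-2k))`. -/

namespace PolyharmonicBubble

lemma fderiv_sum_mul_apply {ι F : Type*} [NormedAddCommGroup F] [NormedSpace ℝ F]
    (s : Finset ι) (c : ι → ℝ) {g : ι → F → ℝ} {y : F}
    (hg : ∀ i ∈ s, DifferentiableAt ℝ (g i) y) (v : F) :
    fderiv ℝ (fun x => ∑ i ∈ s, c i * g i x) y v = ∑ i ∈ s, c i * fderiv ℝ (g i) y v := by
  rw [fderiv_fun_sum fun i hi => (hg i hi).const_mul (c i), sum_apply]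
  refine Finset.sum_congr rfl fun i hi => ?_
  rw [fderiv_const_mul (hg i hi)]
  rfl

local notation "E" n => EuclideanSpace ℝ (Fin n)

variable {n : ℕ}

lemma lap_sum_mul {ι : Type*} (s : Finset ι) (c : ι → ℝ) {f : ι → (E n) → ℝ}
    (hf : ∀ i ∈ s, ContDiff ℝ 2 (f i)) :
    lap (fun x => ∑ i ∈ s, c i * f i x) = fun x => ∑ i ∈ s, c i * lap (f i) x := by
  have hpartial : ∀ i ∈ s, ∀ v : E n, Differentiable ℝ fun y => fderiv ℝ (f i) y v :=
    fun i hi v => (((hf i hi).fderiv_right (m := 1) le_rfl).differentiable one_ne_zero).clm_apply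
      (differentiable_const v)
  funext x
  simp only [lap, fderiv_sum_mul_apply s c fun i hi => (hf i hi).differentiable two_ne_zero _,
    fderiv_sum_mul_apply s c fun i hi => hpartial i hi _ x, Finset.mul_sum, mul_neg,
    Finset.sum_neg_distrib]
  rw [Finset.sum_comm]

def bubble (a p : ℝ) : (E n) → ℝ := fun x => (1 + a * ‖x‖ ^ 2) ^ p

variable {a : ℝ}

lemma one_add_mul_norm_sq_pos (ha : 0 ≤ a) (x : E n) : 0 < 1 + a * ‖x‖ ^ 2 := by positivity

lemma bubble_add_one (ha : 0 ≤ a) (p : ℝ) (x : E n) :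
    bubble a (p + 1) x = bubble a p x * (1 + a * ‖x‖ ^ 2) :=
  Real.rpow_add_one (one_add_mul_norm_sq_pos ha x).ne' p

lemma contDiff_bubble (ha : 0 ≤ a) (p : ℝ) : ContDiff ℝ 2 (bubble (n := n) a p) :=
  (contDiff_const.add (contDiff_const.mul (contDiff_norm_sq ℝ))).rpow_const_of_ne
    fun x => (one_add_mul_norm_sq_pos ha x).ne'

lemma hasFDerivAt_bubble (ha : 0 ≤ a) (p : ℝ) (x : E n) :
    HasFDerivAt (bubble a p) ((2 * a * p * bubble a (p - 1) x) • innerSL ℝ x) x := by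
  have h := (((hasStrictFDerivAt_norm_sq x).hasFDerivAt.const_mul a).const_add 1).rpow_const
    (p := p) (Or.inl (one_add_mul_norm_sq_pos ha x).ne')
  refine h.congr_fderiv ?_
  rw [← Nat.cast_smul_eq_nsmul ℝ, smul_smul, smul_smul]
  congr 1
  simp only [bubble]
  push_cast
  ring

lemma fderiv_bubble_single (ha : 0 ≤ a) (p : ℝ) (y : E n) (j : Fin n) :
    fderiv ℝ (bubble a p) y (EuclideanSpace.single j 1) =
      2 * a * p * (bubble a (p - 1) y * y j) := by
  simp [(hasFDerivAt_bubble ha p y).fderiv, EuclideanSpace.inner_single_right, mul_assoc]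

def lapCoeff₁ (a d p : ℝ) : ℝ := -2 * a * p * (2 * (p - 1) + d)

def lapCoeff₂ (a p : ℝ) : ℝ := 4 * a * p * (p - 1)

lemma lap_bubble (ha : 0 ≤ a) (p : ℝ) (x : E n) :
    lap (bubble a p) x =
      lapCoeff₁ a n p * bubble a (p - 1) x + lapCoeff₂ a p * bubble a (p - 2) x := by
  have hsecond : ∀ j : Fin n,
      fderiv ℝ (fun y => fderiv ℝ (bubble a p) y (EuclideanSpace.single j 1)) x
        (EuclideanSpace.single j 1) =
      2 * a * p * (bubble a (p - 1) x + 2 * a * (p - 1) * bubble a (p - 2) x * x j ^ 2) := by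
    intro j
    simp only [fderiv_bubble_single ha]
    have h : HasFDerivAt (fun y : E n => 2 * a * p * (bubble a (p - 1) y * y j)) _ x :=
      ((hasFDerivAt_bubble ha (p - 1) x).fun_mul
        (EuclideanSpace.proj (𝕜 := ℝ) j).hasFDerivAt).const_mul (2 * a * p)
    rw [h.fderiv]
    simp [EuclideanSpace.inner_single_right, show p - 1 - 1 = p - 2 by ring]
    ring
  have hB : bubble a (p - 1) x = bubble a (p - 2) x * (1 + a * ‖x‖ ^ 2) := by
    rw [← bubble_add_one ha]
    ring_nf
  rw [lap, Finset.sum_congr rfl fun j _ => hsecond j, ← Finset.mul_sum, Finset.sum_add_distrib,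
    ← Finset.mul_sum, ← EuclideanSpace.real_norm_sq_eq x, Finset.sum_const, Finset.card_univ,
    Fintype.card_fin, nsmul_eq_mul, hB, lapCoeff₁, lapCoeff₂]
  ring

lemma sum_range_succ_eq_of_shift {M : Type*} [AddCommMonoid M] (F A B : ℕ → M) (m : ℕ)
    (h0 : F 0 = A 0) (hsucc : ∀ i, F (i + 1) = A (i + 1) + B i) (htop : A (m + 1) = 0) :
    ∑ i ∈ Finset.range (m + 2), F i = ∑ i ∈ Finset.range (m + 1), (A i + B i) := by
  rw [Finset.sum_range_succ', Finset.sum_congr rfl fun i _ => hsucc i, Finset.sum_add_distrib,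
    h0, add_right_comm, ← Finset.sum_range_succ' A, Finset.sum_range_succ A, htop, add_zero,
    Finset.sum_add_distrib]

def iterCoeff (a d p₀ : ℝ) : ℕ → ℕ → ℝ
  | 0, 0 => 1
  | 0, _ + 1 => 0
  | m + 1, 0 => lapCoeff₁ a d (p₀ - m) * iterCoeff a d p₀ m 0
  | m + 1, i + 1 => lapCoeff₁ a d (p₀ - m - (i + 1)) * iterCoeff a d p₀ m (i + 1)
      + lapCoeff₂ a (p₀ - m - i) * iterCoeff a d p₀ m i

lemma iterCoeff_eq_zero_of_lt (a d p₀ : ℝ) {m i : ℕ} (h : m < i) : iterCoeff a d p₀ m i = 0 := by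
  induction m generalizing i with
  | zero => obtain ⟨i, rfl⟩ := Nat.exists_eq_succ_of_ne_zero h.ne'; rfl
  | succ m ih =>
    obtain ⟨i, rfl⟩ := Nat.exists_eq_succ_of_ne_zero (Nat.zero_lt_of_lt h).ne'
    rw [iterCoeff, ih (by omega), ih (by omega), mul_zero, mul_zero, add_zero]

lemma iterate_lap_bubble (ha : 0 ≤ a) (p₀ : ℝ) (m : ℕ) :
    lap^[m] (bubble a p₀ : (E n) → ℝ) =
      fun x => ∑ i ∈ Finset.range (m + 1), iterCoeff a n p₀ m i * bubble a (p₀ - m - i) x := by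
  induction m with
  | zero => funext x; simp [iterCoeff]
  | succ m ih =>
    rw [Function.iterate_succ_apply', ih, lap_sum_mul _ _ fun i _ => contDiff_bubble ha _]
    funext x
    simp only [lap_bubble ha]
    symm
    refine sum_range_succ_eq_of_shift _
      (fun i => iterCoeff a n p₀ m i * (lapCoeff₁ a n (p₀ - m - i) * bubble a (p₀ - m - i - 1) x))
      (fun i => iterCoeff a n p₀ m i * (lapCoeff₂ a (p₀ - m - i) * bubble a (p₀ - m - i - 2) x))
      m ?_ ?_ ?_ |>.trans (Finset.sum_congr rfl fun i _ => (mul_add _ _ _).symm)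
    · simp only [iterCoeff]
      push_cast
      ring_nf
    · intro i
      simp only [iterCoeff]
      push_cast
      ring_nf
    · rw [iterCoeff_eq_zero_of_lt a n p₀ (Nat.lt_succ_self m), zero_mul]

lemma iterCoeff_eq (a d p₀ : ℝ) (m i : ℕ) :
    iterCoeff a d p₀ m i = m.choose i * a ^ m * (∏ j ∈ Finset.range (m + i), (2 * j - 2 * p₀)) *
      ∏ j ∈ Finset.Ico i m, (d + 2 * p₀ - 2 * j - 2) := by
  induction m generalizing i with
  | zero =>
    rcases i with _ | i <;> simp [iterCoeff]
  | succ m ih =>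
    rcases i with _ | i
    · rw [iterCoeff, ih, Finset.prod_range_succ, Finset.prod_Ico_succ_top (Nat.zero_le m)]
      simp only [Nat.choose_zero_right, lapCoeff₁, add_zero]
      push_cast
      ring
    rcases lt_trichotomy i m with hi | rfl | hi
    · have hsr : (m.choose (i + 1) : ℝ) * (i + 1) = m.choose i * (m - i) := by
        have h := congrArg (Nat.cast : ℕ → ℝ) (Nat.choose_succ_right_eq m i)
        push_cast [Nat.cast_sub hi.le] at h
        exact h
      rw [iterCoeff, ih, ih, Nat.choose_succ_succ', show m + 1 + (i + 1) = m + i + 1 + 1 by omega,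
        show m + (i + 1) = m + i + 1 by omega, Finset.prod_range_succ _ (m + i + 1),
        Finset.prod_range_succ _ (m + i), Finset.prod_Ico_succ_top (by omega : i + 1 ≤ m),
        Finset.prod_eq_prod_Ico_succ_bot hi, lapCoeff₁, lapCoeff₂]
      push_cast
      linear_combination
        -8 * a ^ (m + 1) * (∏ j ∈ Finset.range (m + i), (2 * (j : ℝ) - 2 * p₀)) *
          (∏ j ∈ Finset.Ico (i + 1) m, (d + 2 * p₀ - 2 * j - 2)) * (p₀ - m - i - 1) *
          (p₀ - m - i) * hsr
    · rw [iterCoeff, iterCoeff_eq_zero_of_lt a d p₀ (Nat.lt_succ_self i), ih,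
        show i + 1 + (i + 1) = i + i + 1 + 1 by omega, Finset.prod_range_succ _ (i + i + 1),
        Finset.prod_range_succ _ (i + i), lapCoeff₂]
      simp only [Nat.choose_self, Finset.Ico_self, Finset.prod_empty]
      push_cast
      ring
    · have hlt : m + 1 < i + 1 := by omega
      rw [iterCoeff_eq_zero_of_lt a d p₀ hlt, Nat.choose_eq_zero_of_lt hlt]
      simp

lemma iterCoeff_self (a d p₀ : ℝ) (m : ℕ) :
    iterCoeff a d p₀ m m = a ^ m * ∏ j ∈ Finset.range (2 * m), (2 * j - 2 * p₀) := by
  simp [iterCoeff_eq, two_mul]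

lemma iterCoeff_eq_zero_of_lt_of_add_eq (a : ℝ) {d p₀ : ℝ} {k i : ℕ} (h : d + 2 * p₀ = 2 * k)
    (hi : i < k) : iterCoeff a d p₀ k i = 0 := by
  rw [iterCoeff_eq, Finset.prod_eq_zero (i := k - 1) (Finset.mem_Ico.mpr ⟨by omega, by omega⟩),
    mul_zero]
  rw [h, Nat.cast_pred (by omega)]
  ring

lemma bubble_rpow (ha : 0 ≤ a) (p q : ℝ) (x : E n) : bubble a p x ^ q = bubble a (p * q) x :=
  (Real.rpow_mul (one_add_mul_norm_sq_pos ha x).le p q).symm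

lemma prod_range_two_mul_pos {k : ℕ} (hn : 2 * k < n) :
    0 < ∏ j ∈ Finset.range (2 * k), ((n : ℝ) + 2 * j - 2 * k) :=
  Finset.prod_pos fun j _ => by
    have : (2 * k : ℝ) < n := by exact_mod_cast hn
    linarith [(j.cast_nonneg : (0 : ℝ) ≤ j)]

lemma ank_pos {k : ℕ} (hn : 2 * k < n) : 0 < ank n k :=
  Real.rpow_pos_of_pos (prod_range_two_mul_pos hn) _

lemma ank_pow_mul_prod {k : ℕ} (hn : 2 * k < n) :
    ank n k ^ k * ∏ j ∈ Finset.range (2 * k), ((n : ℝ) + 2 * j - 2 * k) = 1 := by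
  rcases eq_or_ne k 0 with rfl | hk
  · simp
  have hP := prod_range_two_mul_pos hn
  rw [ank, ← Real.rpow_natCast, ← Real.rpow_mul hP.le, neg_mul,
    one_div_mul_cancel (by exact_mod_cast hk), Real.rpow_neg_one, inv_mul_cancel₀ hP.ne']

end PolyharmonicBubble

open PolyharmonicBubble

theorem stmt2_general (n k : ℕ) (hn : 2 * k < n) :
    ∀ x : EuclideanSpace ℝ (Fin n),
      (lap^[k]) (Ufun n k) x = Ufun n k x ^ (((n:ℝ) + 2 * (k:ℝ)) / ((n:ℝ) - 2 * (k:ℝ))) := by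
  intro x
  have hnk : (2 * k : ℝ) < n := by exact_mod_cast hn
  set p₀ : ℝ := -(((n : ℝ) - 2 * k) / 2) with hp₀
  have hU : Ufun n k = bubble (ank n k) p₀ := rfl
  have ha := (ank_pos hn).le
  simp only [hU, iterate_lap_bubble ha]
  rw [Finset.sum_range_succ,
    Finset.sum_eq_zero fun i hi => by
      rw [iterCoeff_eq_zero_of_lt_of_add_eq _ (by ring) (Finset.mem_range.mp hi), zero_mul],
    zero_add, iterCoeff_self, bubble_rpow ha]
  have hprod : ∏ j ∈ Finset.range (2 * k), (2 * (j : ℝ) - 2 * p₀) =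
      ∏ j ∈ Finset.range (2 * k), ((n : ℝ) + 2 * j - 2 * k) :=
    Finset.prod_congr rfl fun j _ => by ring
  have hexp : p₀ - k - k = p₀ * ((n + 2 * k) / (n - 2 * k)) := by
    rw [hp₀]
    field_simp [(by linarith : (n : ℝ) - 2 * k ≠ 0)]
    ring
  rw [hprod, ank_pow_mul_prod hn, one_mul, hexp]

/-- `Δ^k U = U^{(n+2k)/(n-2k)}` on `ℝⁿ`. -/
theorem stmt2 (n k : ℕ) (hk : 2 ≤ 2 * k) (hn : 2 * k < n) :
    ∀ x : EuclideanSpace ℝ (Fin n),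
      (lap^[k]) (Ufun n k) x = Ufun n k x ^ (((n:ℝ) + 2 * (k:ℝ)) / ((n:ℝ) - 2 * (k:ℝ))) :=
  stmt2_general n k hn

end
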